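/- Let V be a real normed space and r ≥ 2 a real number. For every ε > 0 there exists a constant C_ε > 0 depending only on r and ε such that for all a ≥ 0, all t ≥ 0 and all τ, η ∈ V: φ_{a+‖τ‖}(t) ≤ ε φ_{a+‖η‖}(‖τ − η‖) + C_ε φ_{a+‖η‖}(t), where φ_b(u) = ∫_0^u (b+σ)^{r−2} σ dσ for b ≥ 0. -/

import Mathlib

/-!
Since `a + ‖τ‖ ≤ (a + ‖η‖) + ‖τ - η‖` and `φ_b(t)` is monotone in `b`, it suffices to bound
`φ_{b+d}(t)`. Splitting `(b + d + s)^{r-2} ≤ 2^{r-2} ((b + s)^{r-2} + d^{r-2})` gives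
`φ_{b+d}(t) ≤ 2^{r-2} (φ_b(t) + d^{r-2} t² / 2)`; the cross term is split by Young's inequality
`d^{r-2} t² ≤ δ² d^r + δ^{2-r} t^r`, and `u^r = r φ_0(u) ≤ r φ_b(u)` turns both powers back into
values of `φ_b`. Choosing `δ²` proportional to `ε` gives the claim.
-/

open MeasureTheory

/-- The shifted function `φ_a(t) = ∫_0^t (a+s)^{r−2} s ds`. -/
noncomputable def phi (r a t : ℝ) : ℝ := ∫ s in (0 : ℝ)..t, (a + s) ^ (r - 2) * s

open Real

lemma Real.add_rpow_le_two_rpow_mul_rpow_add_rpow {x y p : ℝ} (hx : 0 ≤ x) (hy : 0 ≤ y)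
    (hp : 0 ≤ p) :
    (x + y) ^ p ≤ 2 ^ p * (x ^ p + y ^ p) := by
  have hmax : 0 ≤ max x y := le_max_of_le_left hx
  calc (x + y) ^ p ≤ (2 * max x y) ^ p := by
        gcongr
        linarith [le_max_left x y, le_max_right x y]
    _ = 2 ^ p * max x y ^ p := mul_rpow zero_le_two hmax
    _ ≤ 2 ^ p * (x ^ p + y ^ p) := by
        gcongr
        rcases max_choice x y with h | h <;> rw [h]
        · linarith [rpow_nonneg hy p]
        · linarith [rpow_nonneg hx p]

lemma Real.rpow_mul_sq_le_add {p d t δ : ℝ} (hp : 0 ≤ p) (hd : 0 ≤ d) (ht : 0 ≤ t)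
    (hδ : 0 < δ) :
    d ^ p * t ^ 2 ≤ δ ^ 2 * d ^ (p + 2) + δ ^ (-p) * t ^ (p + 2) := by
  have hp2 : p + 2 ≠ 0 := by linarith
  rcases le_or_gt t (δ * d) with htd | htd
  · have : d ^ p * t ^ 2 ≤ δ ^ 2 * d ^ (p + 2) := calc
      d ^ p * t ^ 2 ≤ d ^ p * (δ * d) ^ 2 := by gcongr
      _ = δ ^ 2 * d ^ (p + 2) := by rw [rpow_add' hd hp2, rpow_two]; ring
    linarith [mul_nonneg (rpow_nonneg hδ.le (-p)) (rpow_nonneg ht (p + 2))]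
  · have : d ^ p * t ^ 2 ≤ δ ^ (-p) * t ^ (p + 2) := calc
      d ^ p * t ^ 2 ≤ (t / δ) ^ p * t ^ 2 := by
        gcongr
        rw [le_div_iff₀ hδ]; linarith
      _ = δ ^ (-p) * t ^ (p + 2) := by
        rw [div_rpow ht hδ.le, rpow_add' ht hp2, rpow_two, rpow_neg hδ.le]
        ring
    linarith [mul_nonneg (pow_nonneg hδ.le 2) (rpow_nonneg hd (p + 2))]

section phi

variable {r : ℝ}

lemma continuous_phi_integrand (hr : 2 ≤ r) (b : ℝ) :
    Continuous fun s : ℝ => (b + s) ^ (r - 2) * s :=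
  ((continuous_const.add continuous_id).rpow_const fun _ => Or.inr (by linarith)).mul
    continuous_id

lemma phi_le_phi_of_le (hr : 2 ≤ r) {b b' t : ℝ} (hb : 0 ≤ b) (hbb' : b ≤ b') (ht : 0 ≤ t) :
    phi r b t ≤ phi r b' t := by
  refine intervalIntegral.integral_mono_on ht
    ((continuous_phi_integrand hr b).intervalIntegrable _ _)
    ((continuous_phi_integrand hr b').intervalIntegrable _ _) fun s hs => ?_
  have hs0 := hs.1
  gcongr

lemma phi_zero (hr : 2 ≤ r) (t : ℝ) (ht : 0 ≤ t) : phi r 0 t = t ^ r / r := by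
  have hcongr : Set.EqOn (fun s : ℝ => (0 + s) ^ (r - 2) * s) (fun s => s ^ (r - 1))
      (Set.uIcc 0 t) := fun s hs => by
    rw [Set.uIcc_of_le ht] at hs
    simp only [zero_add]
    rw [show r - 1 = r - 2 + 1 by ring, rpow_add_one' hs.1 (by linarith)]
  rw [phi, intervalIntegral.integral_congr hcongr, integral_rpow (Or.inl (by linarith)),
    sub_add_cancel, zero_rpow (by linarith), sub_zero]

lemma rpow_le_mul_phi (hr : 2 ≤ r) {b t : ℝ} (hb : 0 ≤ b) (ht : 0 ≤ t) :
    t ^ r ≤ r * phi r b t := by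
  have h := phi_le_phi_of_le hr le_rfl hb ht
  rw [phi_zero hr t ht, div_le_iff₀ (by linarith)] at h
  linarith

lemma phi_add_le (hr : 2 ≤ r) {b d t : ℝ} (hb : 0 ≤ b) (hd : 0 ≤ d) (ht : 0 ≤ t) :
    phi r (b + d) t ≤ 2 ^ (r - 2) * (phi r b t + d ^ (r - 2) * t ^ 2 / 2) := by
  have hint : IntervalIntegrable (fun s : ℝ => (b + s) ^ (r - 2) * s) volume 0 t :=
    (continuous_phi_integrand hr b).intervalIntegrable 0 t
  have hlin : IntervalIntegrable (fun s : ℝ => d ^ (r - 2) * s) volume 0 t :=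
    (continuous_const.mul continuous_id).intervalIntegrable _ _
  have hsplit : 2 ^ (r - 2) * (phi r b t + d ^ (r - 2) * t ^ 2 / 2) =
      ∫ s in (0 : ℝ)..t, 2 ^ (r - 2) * ((b + s) ^ (r - 2) * s + d ^ (r - 2) * s) := by
    rw [intervalIntegral.integral_const_mul, intervalIntegral.integral_add hint hlin,
      intervalIntegral.integral_const_mul, integral_id, phi]
    ring
  rw [hsplit]
  refine intervalIntegral.integral_mono_on ht
    ((continuous_phi_integrand hr (b + d)).intervalIntegrable _ _)
    ((hint.add hlin).const_mul _) fun s hs => ?_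
  have hs0 := hs.1
  calc (b + d + s) ^ (r - 2) * s = ((b + s) + d) ^ (r - 2) * s := by ring_nf
    _ ≤ 2 ^ (r - 2) * ((b + s) ^ (r - 2) + d ^ (r - 2)) * s := by
        gcongr
        exact Real.add_rpow_le_two_rpow_mul_rpow_add_rpow (by linarith) hd (by linarith)
    _ = 2 ^ (r - 2) * ((b + s) ^ (r - 2) * s + d ^ (r - 2) * s) := by ring

end phi

/-- Young-type shift-change inequality (4.1b): for `r ≥ 2` and every `ε > 0`
there is `C_ε > 0` depending only on `r` and `ε` such that for all `a ≥ 0`,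
`t ≥ 0` and all `τ, η` in a real normed space,
`φ_{a+‖τ‖}(t) ≤ ε φ_{a+‖η‖}(‖τ − η‖) + C_ε φ_{a+‖η‖}(t)`. -/
theorem young_type_shift_change
    {V : Type*} [NormedAddCommGroup V]
    (r : ℝ) (hr : 2 ≤ r) :
    ∀ ε : ℝ, 0 < ε → ∃ C : ℝ, 0 < C ∧
      ∀ (a t : ℝ), 0 ≤ a → 0 ≤ t → ∀ τ η : V,
        phi r (a + ‖τ‖) t ≤ ε * phi r (a + ‖η‖) ‖τ - η‖ + C * phi r (a + ‖η‖) t := by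
  intro ε hε
  set K : ℝ := 2 ^ (r - 2) * r / 2
  have hK : 0 < K := by positivity
  set δ := √(ε / K)
  have hδ : 0 < δ := sqrt_pos.mpr (by positivity)
  have hδ2 : δ ^ 2 = ε / K := sq_sqrt (by positivity)
  refine ⟨2 ^ (r - 2) + K * δ ^ (2 - r), by positivity, fun a t ha ht τ η => ?_⟩
  have hb : 0 ≤ a + ‖η‖ := by positivity
  calc phi r (a + ‖τ‖) t ≤ phi r (a + ‖η‖ + ‖τ - η‖) t := by
        refine phi_le_phi_of_le hr (by positivity) ?_ ht
        linarith [norm_le_norm_add_norm_sub' τ η]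
    _ ≤ 2 ^ (r - 2) * (phi r (a + ‖η‖) t + ‖τ - η‖ ^ (r - 2) * t ^ 2 / 2) :=
        phi_add_le hr hb (norm_nonneg _) ht
    _ ≤ 2 ^ (r - 2) * (phi r (a + ‖η‖) t +
          (δ ^ 2 * ‖τ - η‖ ^ r + δ ^ (2 - r) * t ^ r) / 2) := by
        gcongr
        simpa only [sub_add_cancel, neg_sub] using
          Real.rpow_mul_sq_le_add (sub_nonneg.mpr hr) (norm_nonneg (τ - η)) ht hδ
    _ ≤ 2 ^ (r - 2) * (phi r (a + ‖η‖) t + (δ ^ 2 * (r * phi r (a + ‖η‖) ‖τ - η‖) +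
          δ ^ (2 - r) * (r * phi r (a + ‖η‖) t)) / 2) := by
        gcongr
        · exact rpow_le_mul_phi hr hb (norm_nonneg _)
        · exact rpow_le_mul_phi hr hb ht
    _ = ε * phi r (a + ‖η‖) ‖τ - η‖ +
          (2 ^ (r - 2) + K * δ ^ (2 - r)) * phi r (a + ‖η‖) t := by
        rw [hδ2]
        field_simp
        ring
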